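/- arXiv:1612.01182 — 7 statements merged into one kernel-verified Lean document; each statement's English description precedes it below -/
import Mathlib

section
/- Let d, δ ∈ ℕ with δ ≥ 3 and d ≥ 4δ, set θ_j = 2πj/d, and ν_{j+1} = sin(θ_j(δ - 1/2))/sin(θ_j/2) for j = 1,...,d-1, with ν_1 = 2δ - 1. Then there exists an absolute constant C > 0 such that min_{j ∈ {2,...,d}} (ν_1 - |ν_j|) ≥ C δ^3 / d^2. -/
open Real

private lemma dirichlet (θ : ℝ) : ∀ n : ℕ, Real.sin (θ * ((n:ℝ) + 1/2)) =
    Real.sin (θ/2) * (1 + 2 * ∑ m ∈ Finset.range n, Real.cos (θ * ((m:ℝ)+1)))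
  | 0 => by norm_num; ring_nf
  | (n+1) => by
    have e : θ * (((n:ℝ)+1) + 1/2) = θ * ((n:ℝ)+1) + θ/2 := by ring
    have e2 : θ * ((n:ℝ) + 1/2) = θ * ((n:ℝ)+1) - θ/2 := by ring
    have IH := dirichlet θ n
    rw [e2, Real.sin_sub] at IH
    push_cast
    rw [e, Real.sin_add, Finset.sum_range_succ]
    push_cast
    nlinarith [IH]

private lemma sumsq (n : ℕ) : ((n:ℝ))^3/3 ≤ ∑ m ∈ Finset.range n, ((m:ℝ)+1)^2 := by
  induction n with
  | zero => simp
  | succ n IH =>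
    rw [Finset.sum_range_succ]
    push_cast
    nlinarith [IH, (Nat.cast_nonneg n : (0:ℝ) ≤ (n:ℝ))]

set_option maxHeartbeats 1600000 in
private lemma key (d δ : ℕ) (hδ : 3 ≤ δ) (hd : 4 * δ ≤ d) (θ : ℝ)
    (h1 : 2*π/d ≤ θ) (h2 : θ ≤ π) :
    (1/2) * (δ:ℝ)^3 / (d:ℝ)^2 ≤ (2 * (δ:ℝ) - 1) -
      |Real.sin (θ * ((δ:ℝ) - 1/2)) / Real.sin (θ/2)| := by
  have hπ := Real.pi_pos
  have hπ3 := Real.pi_gt_three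
  have hπ4 := Real.pi_le_four
  have hδR : (3:ℝ) ≤ (δ:ℝ) := by exact_mod_cast hδ
  have hdR : 4 * (δ:ℝ) ≤ (d:ℝ) := by exact_mod_cast hd
  have hd0 : (0:ℝ) < d := by linarith
  have hθ0 : 0 < θ := lt_of_lt_of_le (by positivity) h1
  have hB : 0 < Real.sin (θ/2) :=
    Real.sin_pos_of_pos_of_lt_pi (by linarith) (by linarith)
  have hd2 : (0:ℝ) < (d:ℝ)^2 := by positivity
  by_cases hc : θ ≤ π / δ
  · -- small θ : use Dirichlet kernel expansion
    have hδ1 : (1:ℕ) ≤ δ := by omega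
    have hcast : ((δ:ℝ) - 1/2) = (((δ - 1 : ℕ):ℝ) + 1/2) := by
      push_cast [hδ1]; ring
    have hD := dirichlet θ (δ - 1)
    rw [← hcast] at hD
    have hApos : 0 < Real.sin (θ * ((δ:ℝ) - 1/2)) := by
      apply Real.sin_pos_of_pos_of_lt_pi
      · have : (0:ℝ) < (δ:ℝ) - 1/2 := by linarith
        positivity
      · have h5 : θ * ((δ:ℝ) - 1/2) ≤ (π/δ) * ((δ:ℝ) - 1/2) := by
          apply mul_le_mul_of_nonneg_right hc; linarith
        have h6 : (π/δ) * ((δ:ℝ) - 1/2) < π := by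
          rw [div_mul_eq_mul_div, div_lt_iff₀ (by linarith : (0:ℝ) < (δ:ℝ))]
          nlinarith
        linarith
    have hνeq : Real.sin (θ * ((δ:ℝ) - 1/2)) / Real.sin (θ/2)
        = 1 + 2 * ∑ m ∈ Finset.range (δ-1), Real.cos (θ * ((m:ℝ)+1)) := by
      rw [hD]; field_simp
    rw [abs_of_pos (div_pos hApos hB), hνeq]
    -- termwise cosine bound
    have hterm : ∀ m ∈ Finset.range (δ-1),
        Real.cos (θ * ((m:ℝ)+1)) ≤ 1 - (θ * ((m:ℝ)+1))^2/8 := by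
      intro m hm
      have hm' : (m:ℝ) + 1 ≤ (δ:ℝ) - 1 := by
        have h9 := Finset.mem_range.mp hm
        have h10 : (m:ℝ) + 1 ≤ ((δ - 1 : ℕ):ℝ) := by exact_mod_cast Nat.succ_le_of_lt h9
        push_cast [hδ1] at h10
        linarith
      have hx0 : 0 ≤ θ * ((m:ℝ)+1) := by positivity
      have hxπ : θ * ((m:ℝ)+1) ≤ π := by
        have h5 : θ * ((m:ℝ)+1) ≤ (π/δ) * ((δ:ℝ)-1) := by
          apply mul_le_mul hc hm' (by positivity) (by positivity)
        have h6 : (π/δ) * ((δ:ℝ)-1) ≤ π := by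
          rw [div_mul_eq_mul_div, div_le_iff₀ (by linarith : (0:ℝ) < (δ:ℝ))]
          nlinarith
        linarith
      have hcb := Real.cos_le_one_sub_mul_cos_sq (x := θ * ((m:ℝ)+1))
        (by rw [abs_of_nonneg hx0]; exact hxπ)
      have h18 : (1:ℝ)/8 ≤ 2/π^2 := by
        rw [div_le_div_iff₀ (by norm_num) (by positivity)]
        nlinarith
      nlinarith [mul_le_mul_of_nonneg_right h18 (sq_nonneg (θ * ((m:ℝ)+1)))]
    have hsum : ∑ m ∈ Finset.range (δ-1), Real.cos (θ * ((m:ℝ)+1))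
        ≤ ∑ m ∈ Finset.range (δ-1), (1 - (θ * ((m:ℝ)+1))^2/8) :=
      Finset.sum_le_sum hterm
    have hsplit : ∑ m ∈ Finset.range (δ-1), (1 - (θ * ((m:ℝ)+1))^2/8)
        = ((δ:ℝ) - 1) - (θ^2/8) * ∑ m ∈ Finset.range (δ-1), ((m:ℝ)+1)^2 := by
      have e1 : ∀ m : ℕ, (1:ℝ) - (θ * ((m:ℝ)+1))^2/8 = 1 - (θ^2/8) * ((m:ℝ)+1)^2 := by
        intro m; ring
      simp only [e1]
      rw [Finset.sum_sub_distrib, Finset.sum_const, Finset.card_range, nsmul_eq_mul,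
        ← Finset.mul_sum]
      push_cast [hδ1]
      ring
    have hScast : ((δ:ℝ) - 1)^3/3 ≤ ∑ m ∈ Finset.range (δ-1), ((m:ℝ)+1)^2 := by
      have h11 := sumsq (δ - 1)
      push_cast [hδ1] at h11
      linarith
    have hθd : 2*π ≤ θ * d := by
      rw [div_le_iff₀ hd0] at h1; linarith
    have hθ2 : 36 / (d:ℝ)^2 ≤ θ^2 := by
      rw [div_le_iff₀ hd2]
      nlinarith [hθd, hπ3, hθ0, hd0]
    have hSnn : (0:ℝ) ≤ ∑ m ∈ Finset.range (δ-1), ((m:ℝ)+1)^2 :=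
      Finset.sum_nonneg (fun m _ => by positivity)
    have hq1 : (36/(d:ℝ)^2/8) * (((δ:ℝ)-1)^3/3) ≤
        (θ^2/8) * ∑ m ∈ Finset.range (δ-1), ((m:ℝ)+1)^2 :=
      mul_le_mul (by linarith) hScast (by nlinarith [pow_nonneg (by linarith : (0:ℝ) ≤ (δ:ℝ)-1) 3]) (by positivity)
    have hq2 : (36/(d:ℝ)^2/8) * (((δ:ℝ)-1)^3/3) = (3/2) * (((δ:ℝ)-1)^3 / (d:ℝ)^2) := by
      field_simp; ring
    have hq1' : (3/2) * (((δ:ℝ)-1)^3 / (d:ℝ)^2) ≤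
        (θ^2/8) * ∑ m ∈ Finset.range (δ-1), ((m:ℝ)+1)^2 := by
      rw [← hq2]; exact hq1
    have hq3 : (1/2) * (δ:ℝ)^3 / (d:ℝ)^2 ≤ 3 * (((δ:ℝ)-1)^3 / (d:ℝ)^2) := by
      have h14 : (1/2) * (δ:ℝ)^3 ≤ 3 * ((δ:ℝ)-1)^3 := by
        nlinarith [hδR, sq_nonneg ((δ:ℝ) - 3)]
      calc (1/2) * (δ:ℝ)^3 / (d:ℝ)^2 = (1/2*(δ:ℝ)^3)/(d:ℝ)^2 := by ring
        _ ≤ (3*((δ:ℝ)-1)^3)/(d:ℝ)^2 := by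
              exact div_le_div_of_nonneg_right h14 hd2.le
        _ = 3 * (((δ:ℝ)-1)^3 / (d:ℝ)^2) := by ring
    linarith [hsum, hsplit, hq1', hq3]
  · -- large θ : |ν| ≤ δ
    push_neg at hc
    have hB2 : 1/(δ:ℝ) ≤ Real.sin (θ/2) := by
      have h12 := Real.mul_le_sin (x := θ/2) (by linarith) (by linarith)
      have h7 : 2/π * (θ/2) = θ/π := by ring
      rw [h7] at h12
      have h8 : 1/(δ:ℝ) ≤ θ/π := by
        rw [div_le_div_iff₀ (by linarith) hπ]
        rw [div_lt_iff₀ (by linarith : (0:ℝ) < (δ:ℝ))] at hc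
        linarith
      linarith
    have hν : |Real.sin (θ * ((δ:ℝ) - 1/2)) / Real.sin (θ/2)| ≤ (δ:ℝ) := by
      rw [abs_div, abs_of_pos hB, div_le_iff₀ hB]
      calc |Real.sin (θ * ((δ:ℝ) - 1/2))| ≤ 1 := Real.abs_sin_le_one _
        _ ≤ (δ:ℝ) * Real.sin (θ/2) := by
            rw [div_le_iff₀ (by linarith : (0:ℝ) < (δ:ℝ))] at hB2
            nlinarith [hB2]
    have h13 : (1/2) * (δ:ℝ)^3 / (d:ℝ)^2 ≤ (δ:ℝ) - 1 := by
      rw [div_le_iff₀ hd2]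
      have e1 : 16*(δ:ℝ)^2 ≤ (d:ℝ)^2 := by nlinarith [hdR, hδR]
      have e2 : ((δ:ℝ)-1) * (16*(δ:ℝ)^2) ≤ ((δ:ℝ)-1) * (d:ℝ)^2 :=
        mul_le_mul_of_nonneg_left e1 (by linarith)
      nlinarith [e2, mul_nonneg (sq_nonneg (δ:ℝ)) (by linarith : (0:ℝ) ≤ (δ:ℝ) - 3)]
    linarith

set_option maxHeartbeats 1600000 in
theorem stmt_3 :
    ∃ C : ℝ, 0 < C ∧ ∀ d δ : ℕ, 3 ≤ δ → 4 * δ ≤ d → ∀ j : ℕ, 2 ≤ j → j ≤ d →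
      C * (δ:ℝ)^3 / (d:ℝ)^2 ≤
        (2 * (δ:ℝ) - 1) -
          |Real.sin ((2 * π * ((j:ℝ) - 1) / d) * ((δ:ℝ) - 1/2)) /
            Real.sin ((2 * π * ((j:ℝ) - 1) / d) / 2)| := by
  refine ⟨1/2, by norm_num, ?_⟩
  intro d δ hδ hd j hj2 hjd
  have hπ := Real.pi_pos
  have hd0 : (0:ℝ) < d := by
    have h : (12:ℕ) ≤ d := by omega
    have : (12:ℝ) ≤ (d:ℝ) := by exact_mod_cast h
    linarith
  have hj1 : (1:ℝ) ≤ (j:ℝ) - 1 := by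
    have : (2:ℝ) ≤ (j:ℝ) := by exact_mod_cast hj2
    linarith
  have hjR : (j:ℝ) ≤ (d:ℝ) := by exact_mod_cast hjd
  set θ : ℝ := 2 * π * ((j:ℝ) - 1) / d with hθdef
  have h1 : 2*π/d ≤ θ := by
    rw [hθdef, div_le_div_iff₀ hd0 hd0]
    nlinarith [mul_nonneg (mul_nonneg (by linarith : (0:ℝ) ≤ 2*π)
      (by linarith : (0:ℝ) ≤ (j:ℝ) - 2)) hd0.le]
  by_cases hcase : 2 * j ≤ d + 2
  · apply key d δ hδ hd θ h1
    have h9 : 2*(j:ℝ) ≤ (d:ℝ) + 2 := by exact_mod_cast hcase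
    rw [hθdef, div_le_iff₀ hd0]
    nlinarith
  · push_neg at hcase
    have h9 : (d:ℝ) + 3 ≤ 2*(j:ℝ) := by
      have h : d + 3 ≤ 2 * j := by omega
      exact_mod_cast h
    set θ' : ℝ := 2 * π - θ with hθ'def
    have hθπ : π ≤ θ := by
      rw [hθdef, le_div_iff₀ hd0]
      nlinarith
    have h1' : 2*π/d ≤ θ' := by
      rw [hθ'def, hθdef]
      rw [div_le_iff₀ hd0]
      have e : (2*π - 2*π*((j:ℝ)-1)/d)*d = 2*π*d - 2*π*((j:ℝ)-1) := by
        field_simp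
      rw [e]
      nlinarith
    have h2' : θ' ≤ π := by rw [hθ'def]; linarith
    have hhalf : Real.sin (θ'/2) = Real.sin (θ/2) := by
      rw [show θ'/2 = π - θ/2 by rw [hθ'def]; ring, Real.sin_pi_sub]
    have hfull : Real.sin (θ' * ((δ:ℝ) - 1/2)) = Real.sin (θ * ((δ:ℝ) - 1/2)) := by
      have e : θ' * ((δ:ℝ) - 1/2) = (δ:ℕ) * (2*π) - (π + θ*((δ:ℝ)-1/2)) := by
        push_cast
        rw [hθ'def]; ring
      rw [e, Real.sin_nat_mul_two_pi_sub, Real.sin_add, Real.sin_pi, Real.cos_pi]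
      ring
    have hk := key d δ hδ hd θ' h1' h2'
    rw [hfull, hhalf] at hk
    exact hk
end

section
/- Let d ≥ 4(δ - 1) and δ ≥ 2, and set θ_1 = 2π/d. Then (2δ - 1) - (1 + 2∑_{k=1}^{δ-1} cos(kθ_1)) ≥ (π^2/3)(δ^3/d^2). -/
/-!
Write `m = δ - 1` and `θ = 2π/d`. The gap equals `2 ∑_{k=1}^m (1 - cos kθ)`, and every angle satisfies
`kθ ≤ 2πm/d ≤ π/2 < 2`. On `|x| ≤ 2` the Taylor bound `1 - cos x ≥ x²/2 - x⁴/24` gives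
`1 - cos x ≥ x²/3`, so the gap is at least `(2/3) θ² ∑ k² = (4π²/9) m(m+1)(2m+1)/d²`.
This exceeds `(π²/3)(m+1)³/d²` by `π²(m+1)(m-1)(5m+3)/(9d²) ≥ 0`.
-/

open Real

theorem sq_div_two_sub_pow_four_le_one_sub_cos {x : ℝ} (hx : x ^ 2 ≤ 24) :
    x ^ 2 / 2 - x ^ 4 / 24 ≤ 1 - cos x := by
  set y := |x| / 2 with hy
  have hy₀ : 0 ≤ y := by positivity
  have hy₂ : y ^ 2 = x ^ 2 / 4 := by rw [hy, div_pow, sq_abs]; norm_num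
  have hcos : 1 - cos x = 2 * sin y ^ 2 := by
    rw [← cos_abs, show |x| = 2 * y by rw [hy]; ring, cos_two_mul_eq_one_sub]; ring
  have htaylor : 0 ≤ y - y ^ 3 / 6 := by nlinarith
  have hsin : (y - y ^ 3 / 6) ^ 2 ≤ sin y ^ 2 :=
    pow_le_pow_left₀ htaylor (sin_ge_sub_cube hy₀) 2
  rw [hcos]
  nlinarith [pow_nonneg (sq_nonneg y) 3]

theorem sq_div_three_le_one_sub_cos {x : ℝ} (hx : |x| ≤ 2) : x ^ 2 / 3 ≤ 1 - cos x := by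
  have hx₂ : x ^ 2 ≤ 4 := by nlinarith [sq_abs x, abs_nonneg x]
  nlinarith [sq_div_two_sub_pow_four_le_one_sub_cos (x := x) (by linarith), sq_nonneg x]

theorem sum_Icc_sq (m : ℕ) :
    ∑ k ∈ Finset.Icc 1 m, (k : ℝ) ^ 2 = m * (m + 1) * (2 * m + 1) / 6 := by
  induction m with
  | zero => simp
  | succ n ih =>
    rw [Finset.sum_Icc_succ_top (by omega), ih]
    push_cast
    ring

theorem sum_Icc_one_sub_cos_mul_ge {m : ℕ} {θ : ℝ} (hθ : 0 ≤ θ) (hmθ : m * θ ≤ 2) :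
    θ ^ 2 / 3 * (m * (m + 1) * (2 * m + 1) / 6) ≤
      ∑ k ∈ Finset.Icc 1 m, (1 - cos (k * θ)) := by
  rw [← sum_Icc_sq, Finset.mul_sum]
  refine Finset.sum_le_sum fun k hk => ?_
  have hkm : (k : ℝ) ≤ m := by exact_mod_cast (Finset.mem_Icc.1 hk).2
  have hkθ : |k * θ| ≤ 2 := by
    rw [abs_of_nonneg (by positivity)]
    exact (mul_le_mul_of_nonneg_right hkm hθ).trans hmθ
  calc θ ^ 2 / 3 * (k : ℝ) ^ 2 = (k * θ) ^ 2 / 3 := by ring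
    _ ≤ 1 - cos (k * θ) := sq_div_three_le_one_sub_cos hkθ

theorem stmt_6 (d δ : ℕ) (hδ : 2 ≤ δ) (hd : 4 * (δ - 1) ≤ d) :
    (π^2 / 3) * ((δ:ℝ)^3 / (d:ℝ)^2) ≤
      (2 * (δ:ℝ) - 1) - (1 + 2 * ∑ k ∈ Finset.Icc 1 (δ - 1), Real.cos (k * (2 * π / d))) := by
  obtain ⟨m, rfl⟩ : ∃ m, δ = m + 1 := ⟨δ - 1, by omega⟩
  rw [Nat.add_sub_cancel] at hd ⊢
  have hm : (1 : ℝ) ≤ m := by exact_mod_cast (by omega : 1 ≤ m)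
  have hdm : 4 * (m : ℝ) ≤ d := by exact_mod_cast hd
  have hd₀ : (0 : ℝ) < d := by linarith
  have hθ : m * (2 * π / d) ≤ 2 := by
    rw [mul_div_assoc', div_le_iff₀ hd₀]
    nlinarith [pi_lt_four, pi_pos]
  have hgap : (2 * ((m + 1 : ℕ) : ℝ) - 1) - (1 + 2 * ∑ k ∈ Finset.Icc 1 m, cos (k * (2 * π / d)))
      = 2 * ∑ k ∈ Finset.Icc 1 m, (1 - cos (k * (2 * π / d))) := by
    rw [Finset.sum_sub_distrib, Finset.sum_const, Nat.card_Icc]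
    push_cast
    ring
  have hpoly : π ^ 2 / 3 * (((m + 1 : ℕ) : ℝ) ^ 3 / d ^ 2)
      + π ^ 2 * (m + 1) * ((m - 1) * (5 * m + 3)) / (9 * d ^ 2)
      = 2 * ((2 * π / d) ^ 2 / 3 * (m * (m + 1) * (2 * m + 1) / 6)) := by
    push_cast
    field_simp
    ring
  have hm₁ : (0 : ℝ) ≤ m - 1 := by linarith
  calc π ^ 2 / 3 * (((m + 1 : ℕ) : ℝ) ^ 3 / d ^ 2)
      ≤ 2 * ((2 * π / d) ^ 2 / 3 * (m * (m + 1) * (2 * m + 1) / 6)) := by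
        rw [← hpoly]
        exact le_add_of_nonneg_right (by positivity)
    _ ≤ 2 * ∑ k ∈ Finset.Icc 1 m, (1 - cos (k * (2 * π / d))) := by
        gcongr
        exact sum_Icc_one_sub_cos_mul_ge (by positivity) hθ
    _ = _ := hgap.symm
end

section
/- Let d ≥ 1 and δ ≥ 1, and set θ_1 = 2π/d. Then (2δ - 1) - sin(θ_1(δ - 1/2))/sin(θ_1/2) ≤ (1/6)(π/d)^2 (2δ - 1)^3, assuming sin(π/d) > 0. -/
/-! With `a = π / d` and `m = 2δ - 1` the claim reads `m - sin (m a) / sin a ≤ a² m³ / 6`, i.e.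
`(m - a² m³ / 6) sin a ≤ sin (m a)`. While `sin (m a) ≥ 0` this follows from `sin a ≤ a` and
`x - x³ / 6 ≤ sin x`. Once `sin (m a) < 0` we have `x = m a > π`, and Jordan's inequality
`sin a ≥ 2a / π` makes the left side at most `-(x³ - 6x) / (3π) ≤ -(π² - 6) / 3 < -1`. -/

open Real

namespace Real

variable {a m : ℝ}

lemma sub_mul_sin_le_neg_one_of_pi_lt (ha : 0 ≤ a) (ha' : a ≤ π / 2) (hm : 0 ≤ m)
    (hπ : π < m * a) : (m - 1 / 6 * a ^ 2 * m ^ 3) * sin a ≤ -1 := by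
  have hpi : 3 < π := pi_gt_three
  have hjordan : 2 / π * a ≤ sin a := mul_le_sin ha ha'
  have hcoef : 0 ≤ 1 / 6 * a ^ 2 * m ^ 3 - m := by
    have : 6 ≤ (m * a) ^ 2 := by nlinarith
    nlinarith
  have hcube : 3 * π ≤ (m * a) ^ 3 - 6 * (m * a) := by
    have hx : 0 < m * a := pi_pos.trans hπ
    nlinarith [mul_pos (sub_pos.2 hπ) (by nlinarith : (0 : ℝ) < (m * a) ^ 2 + m * a * π + π ^ 2 - 6)]
  calc (m - 1 / 6 * a ^ 2 * m ^ 3) * sin a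
      ≤ (m - 1 / 6 * a ^ 2 * m ^ 3) * (2 / π * a) := by nlinarith
    _ = -((m * a) ^ 3 - 6 * (m * a)) / (3 * π) := by field_simp; ring
    _ ≤ -1 := by rw [div_le_iff₀ (by positivity)]; linarith

lemma sub_mul_sin_le_sin_mul (ha : 0 ≤ a) (ha' : a ≤ π / 2) (hm : 0 ≤ m) :
    (m - 1 / 6 * a ^ 2 * m ^ 3) * sin a ≤ sin (m * a) := by
  rcases le_or_gt 0 (sin (m * a)) with hpos | hneg
  · rcases le_or_gt 0 (m - 1 / 6 * a ^ 2 * m ^ 3) with hc | hc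
    · calc (m - 1 / 6 * a ^ 2 * m ^ 3) * sin a
          ≤ (m - 1 / 6 * a ^ 2 * m ^ 3) * a := mul_le_mul_of_nonneg_left (sin_le ha) hc
        _ = m * a - (m * a) ^ 3 / 6 := by ring
        _ ≤ sin (m * a) := sin_ge_sub_cube (by positivity)
    · nlinarith [sin_nonneg_of_nonneg_of_le_pi ha (ha'.trans (by linarith [pi_pos]))]
  · have hπ : π < m * a := by
      by_contra! h
      exact hneg.not_ge (sin_nonneg_of_nonneg_of_le_pi (by positivity) h)
    linarith [sub_mul_sin_le_neg_one_of_pi_lt ha ha' hm hπ, neg_one_le_sin (m * a)]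

lemma sub_sin_mul_div_sin_le (ha : 0 < a) (ha' : a ≤ π / 2) (hm : 0 ≤ m) :
    m - sin (m * a) / sin a ≤ 1 / 6 * a ^ 2 * m ^ 3 := by
  have hsin : 0 < sin a := sin_pos_of_pos_of_lt_pi ha (by linarith [pi_pos])
  have := sub_mul_sin_le_sin_mul ha.le ha' hm
  rw [← le_div_iff₀ hsin] at this
  linarith

end Real

theorem stmt_7_general (d δ : ℕ) (hδ : 1 ≤ δ) (hsin : 0 < Real.sin (π / d)) :
    (2 * (δ:ℝ) - 1) -
        Real.sin ((2 * π / d) * ((δ:ℝ) - 1/2)) / Real.sin ((2 * π / d) / 2) ≤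
      (1/6) * (π / d)^2 * (2 * (δ:ℝ) - 1)^3 := by
  have hd : 2 ≤ d := by
    by_contra! h
    interval_cases d <;> simp at hsin
  have ha' : π / d ≤ π / 2 := div_le_div_of_nonneg_left pi_pos.le two_pos (by exact_mod_cast hd)
  have hm : (0 : ℝ) ≤ 2 * δ - 1 := by
    have : (1 : ℝ) ≤ δ := by exact_mod_cast hδ
    linarith
  have hangle : 2 * π / d * ((δ : ℝ) - 1 / 2) = (2 * δ - 1) * (π / d) := by ring
  rw [hangle, show 2 * π / d / 2 = π / d by ring]
  exact sub_sin_mul_div_sin_le (by positivity) ha' hm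

theorem stmt_7 (d δ : ℕ) (hd : 1 ≤ d) (hδ : 1 ≤ δ) (hsin : 0 < Real.sin (π / d)) :
    (2 * (δ:ℝ) - 1) -
        Real.sin ((2 * π / d) * ((δ:ℝ) - 1/2)) / Real.sin ((2 * π / d) / 2) ≤
      (1/6) * (π / d)^2 * (2 * (δ:ℝ) - 1)^3 :=
  stmt_7_general d δ hδ hsin
end

section
/- Let G be a finite connected weighted graph on d vertices with degree matrix D ≻ 0, adjacency W, and Laplacian L = I - D^{-1/2}WD^{-1/2} having spectral gap τ = λ'_2 > 0 (second smallest eigenvalue). Let g ∈ ℂ^d with |g_i| = 1 for all i. Then there exists θ ∈ [0, 2π] such that τ ∑_{i} deg(i) |g_i - e^{iθ}|^2 ≤ 2 ∑_{(i,j) ∈ E} |g_i - g_j|^2. -/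
/-!
Let `b` be the degree-weighted mean of `g`. Since every `|g i| = 1`, the parallel-axis identity
gives `∑ deg i * |g i - b|^2 = vol * (1 - |b|^2)`, and the spectral gap bounds this by the edge sum
because `g - b` has weighted mean zero. Moving `b` radially to the unit circle costs
`vol * (1 - |b|)^2 ≤ vol * (1 - |b|^2)`, so the unit point `e^{iθ} = b / |b|` at most doubles the
weighted variance.
-/

open Real Complex Finset

theorem Finset.sum_smul_sub_centerMass {R E ι : Type*} [Field R] [LinearOrder R]
    [IsStrictOrderedRing R] [AddCommGroup E] [Module R E] {s : Finset ι} {w : ι → R}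
    (z : ι → E) (hw : ∑ i ∈ s, w i ≠ 0) :
    ∑ i ∈ s, w i • (z i - s.centerMass w z) = 0 := by
  simp only [smul_sub, sum_sub_distrib, ← sum_smul, centerMass, smul_inv_smul₀ hw, sub_self]

theorem exists_norm_eq_one_norm_sub_eq {E : Type*} [NormedAddCommGroup E] [NormedSpace ℝ E]
    [Nontrivial E] {b : E} (hb : ‖b‖ ≤ 1) : ∃ c : E, ‖c‖ = 1 ∧ ‖b - c‖ = 1 - ‖b‖ := by
  rcases eq_or_ne b 0 with rfl | hb0
  · obtain ⟨c, hc⟩ := exists_norm_eq E zero_le_one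
    exact ⟨c, hc, by simp [hc]⟩
  · have hpos : 0 < ‖b‖ := norm_pos_iff.2 hb0
    refine ⟨‖b‖⁻¹ • b, by simp [norm_smul, hpos.ne'], ?_⟩
    have hsub : b - ‖b‖⁻¹ • b = (1 - ‖b‖⁻¹) • b := by rw [sub_smul, one_smul]
    have hinv : 1 ≤ ‖b‖⁻¹ := one_le_inv_iff₀.2 ⟨hpos, hb⟩
    rw [hsub, norm_smul, Real.norm_eq_abs, abs_of_nonpos (sub_nonpos.2 hinv), neg_sub, sub_mul,
      inv_mul_cancel₀ hpos.ne', one_mul]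

section WeightedVariance

variable {ι E : Type*} [Fintype ι] [NormedAddCommGroup E] [InnerProductSpace ℝ E]
  {m : ι → ℝ} {x : ι → E} {b : E}

theorem sum_mul_norm_sub_sq_eq_add (hb : ∑ i, m i • (x i - b) = 0) (z : E) :
    ∑ i, m i * ‖x i - z‖ ^ 2 = ∑ i, m i * ‖x i - b‖ ^ 2 + (∑ i, m i) * ‖b - z‖ ^ 2 := by
  have hcross : ∑ i, m i * (2 * inner ℝ (x i - b) (b - z)) = 0 := by
    calc ∑ i, m i * (2 * inner ℝ (x i - b) (b - z))
        = 2 * inner ℝ (∑ i, m i • (x i - b)) (b - z) := by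
          rw [sum_inner, mul_sum]
          refine sum_congr rfl fun i _ => ?_
          rw [real_inner_smul_left]
          ring
      _ = 0 := by rw [hb, inner_zero_left, mul_zero]
  calc ∑ i, m i * ‖x i - z‖ ^ 2
      = ∑ i, (m i * ‖x i - b‖ ^ 2 + m i * (2 * inner ℝ (x i - b) (b - z)) +
          m i * ‖b - z‖ ^ 2) := by
        refine sum_congr rfl fun i _ => ?_
        rw [← sub_add_sub_cancel (x i) b z, norm_add_sq_real]
        ring
    _ = ∑ i, m i * ‖x i - b‖ ^ 2 + (∑ i, m i) * ‖b - z‖ ^ 2 := by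
        rw [sum_add_distrib, sum_add_distrib, hcross, add_zero, sum_mul]

theorem sum_mul_norm_sub_sq_eq_of_norm_eq_one (hx : ∀ i, ‖x i‖ = 1)
    (hb : ∑ i, m i • (x i - b) = 0) :
    ∑ i, m i * ‖x i - b‖ ^ 2 = (∑ i, m i) * (1 - ‖b‖ ^ 2) := by
  have h := sum_mul_norm_sub_sq_eq_add hb 0
  simp only [sub_zero, hx, one_pow, mul_one] at h
  linarith

theorem exists_norm_eq_one_sum_mul_norm_sub_sq_le [Nontrivial E] (hm : ∀ i, 0 ≤ m i)
    (hx : ∀ i, ‖x i‖ = 1) (hM : 0 < ∑ i, m i) (hb : ∑ i, m i • (x i - b) = 0) :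
    ∃ c : E, ‖c‖ = 1 ∧ ∑ i, m i * ‖x i - c‖ ^ 2 ≤ 2 * ∑ i, m i * ‖x i - b‖ ^ 2 := by
  have hvar := sum_mul_norm_sub_sq_eq_of_norm_eq_one hx hb
  have hb1 : ‖b‖ ≤ 1 := by
    have h : 0 ≤ (∑ i, m i) * (1 - ‖b‖ ^ 2) :=
      hvar ▸ sum_nonneg fun i _ => mul_nonneg (hm i) (sq_nonneg _)
    have h' : ‖b‖ ^ 2 ≤ 1 := sub_nonneg.1 ((mul_nonneg_iff_of_pos_left hM).1 h)
    exact (pow_le_one_iff_of_nonneg (norm_nonneg b) two_ne_zero).1 h'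
  obtain ⟨c, hc, hbc⟩ := exists_norm_eq_one_norm_sub_eq hb1
  refine ⟨c, hc, ?_⟩
  rw [sum_mul_norm_sub_sq_eq_add hb c, hbc, hvar]
  nlinarith [mul_nonneg (mul_nonneg hM.le (norm_nonneg b)) (sub_nonneg.2 hb1)]

end WeightedVariance

theorem Complex.exists_mem_Icc_exp_mul_I_eq {c : ℂ} (hc : ‖c‖ = 1) :
    ∃ θ ∈ Set.Icc (0 : ℝ) (2 * π), exp (θ * I) = c := by
  obtain ⟨θ, rfl⟩ := (norm_eq_one_iff c).1 hc
  have hper : Function.Periodic (fun t : ℝ => exp (t * I)) (2 * π) := fun t => by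
    simpa using exp_mul_I_periodic t
  obtain ⟨θ', hθ', heq⟩ := hper.exists_mem_Ico₀ two_pi_pos θ
  exact ⟨θ', Set.Ico_subset_Icc_self hθ', heq.symm⟩

theorem stmt_11_general (d : ℕ) (hd : 0 < d) (w : Fin d → Fin d → ℝ)
    (hnonneg : ∀ i j, 0 ≤ w i j)
    (deg : Fin d → ℝ) (hdegpos : ∀ i, 0 < deg i)
    (τ : ℝ) (hτ : 0 < τ)
    (hgap : ∀ y : Fin d → ℂ, (∑ i, (deg i : ℂ) * y i) = 0 →
      τ * ∑ i, deg i * ‖y i‖^2 ≤ (1/2) * ∑ i, ∑ j, w i j * ‖y i - y j‖^2)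
    (g : Fin d → ℂ) (hg : ∀ i, ‖g i‖ = 1) :
    ∃ θ ∈ Set.Icc (0:ℝ) (2 * π),
      τ * ∑ i, deg i * ‖g i - Complex.exp (θ * Complex.I)‖^2 ≤
        2 * ∑ i, ∑ j, w i j * ‖g i - g j‖^2 := by
  set b := univ.centerMass deg g
  have hvol : 0 < ∑ i, deg i := sum_pos (fun i _ => hdegpos i) ⟨⟨0, hd⟩, mem_univ _⟩
  have hb : ∑ i, deg i • (g i - b) = 0 := sum_smul_sub_centerMass g hvol.ne'
  obtain ⟨c, hc, hgc⟩ :=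
    exists_norm_eq_one_sum_mul_norm_sub_sq_le (fun i => (hdegpos i).le) hg hvol hb
  obtain ⟨θ, hθ, rfl⟩ := exists_mem_Icc_exp_mul_I_eq hc
  have hgapb : τ * ∑ i, deg i * ‖g i - b‖ ^ 2 ≤ (1/2) * ∑ i, ∑ j, w i j * ‖g i - g j‖ ^ 2 := by
    simpa only [sub_sub_sub_cancel_right] using
      hgap (fun i => g i - b) (by simpa only [real_smul] using hb)
  have hedges : 0 ≤ ∑ i, ∑ j, w i j * ‖g i - g j‖ ^ 2 :=
    sum_nonneg fun i _ => sum_nonneg fun j _ => mul_nonneg (hnonneg i j) (sq_nonneg _)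
  refine ⟨θ, hθ, ?_⟩
  calc τ * ∑ i, deg i * ‖g i - exp (θ * I)‖ ^ 2
      ≤ τ * (2 * ∑ i, deg i * ‖g i - b‖ ^ 2) := mul_le_mul_of_nonneg_left hgc hτ.le
    _ ≤ 2 * ∑ i, ∑ j, w i j * ‖g i - g j‖ ^ 2 := by linarith

theorem stmt_11 (d : ℕ) (hd : 0 < d) (w : Fin d → Fin d → ℝ)
    (hsymm : ∀ i j, w i j = w j i) (hnonneg : ∀ i j, 0 ≤ w i j)
    (deg : Fin d → ℝ) (hdeg : ∀ i, deg i = ∑ j, w i j) (hdegpos : ∀ i, 0 < deg i)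
    (τ : ℝ) (hτ : 0 < τ)
    (hgap : ∀ y : Fin d → ℂ, (∑ i, (deg i : ℂ) * y i) = 0 →
      τ * ∑ i, deg i * ‖y i‖^2 ≤ (1/2) * ∑ i, ∑ j, w i j * ‖y i - y j‖^2)
    (g : Fin d → ℂ) (hg : ∀ i, ‖g i‖ = 1) :
    ∃ θ ∈ Set.Icc (0:ℝ) (2 * π),
      τ * ∑ i, deg i * ‖g i - Complex.exp (θ * Complex.I)‖^2 ≤
        2 * ∑ i, ∑ j, w i j * ‖g i - g j‖^2 :=
  stmt_11_general d hd w hnonneg deg hdegpos τ hτ hgap g hg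
end

section
/- Let d, δ, s be such that the masks m_1 = e_1, m_{2j} = e_1 + e_{j+1}, m_{2j+1} = e_1 + i·e_{j+1} for j = 1, ..., δ-1 are vectors in ℂ^d. Then the collection {S_ℓ m_j m_j^* S_ℓ^* : ℓ ∈ {0,...,d-1}, j ∈ {1,...,2δ-1}} spans T_δ(ℂ^{d×d}), the space of matrices supported within circular bandwidth δ; in particular, it is a basis since its cardinality d(2δ-1) equals the dimension of T_δ(ℂ^{d×d}). -/
/-
The generators with shift ℓ = -a are the rank-one matrices x x* for x = e_a, e_a + e_(a+t) and
e_a + i e_(a+t) with 1 ≤ t < δ. Polarization recovers e_a e_b* and e_b e_a* from these four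
rank-one matrices, so the span contains every elementary matrix E_ab with circular distance < δ;
conversely each generator is supported on pairs at circular distance ≤ t < δ. Thus the span is
T_δ, whose dimension is the number of pairs at circular distance < δ, namely d(2δ - 1).
-/

open Matrix

/-- circular distance between indices in `Fin d` -/
def circDist {d : ℕ} (j k : Fin d) : ℕ :=
  min ((j:ℤ) - (k:ℤ)).natAbs (d - ((j:ℤ) - (k:ℤ)).natAbs)

/-- the subspace `T_δ(ℂ^{d×d})` of matrices supported within circular bandwidth `δ` -/
noncomputable def bandSubmodule (d δ : ℕ) : Submodule ℂ (Matrix (Fin d) (Fin d) ℂ) where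
  carrier := {A | ∀ j k : Fin d, δ ≤ circDist j k → A j k = 0}
  add_mem' := by
    intro A B hA hB j k h
    simp [Matrix.add_apply, hA j k h, hB j k h]
  zero_mem' := by intro j k h; rfl
  smul_mem' := by
    intro c A hA j k h
    simp [Matrix.smul_apply, hA j k h]

/-- the masks `m_1 = e_1`, `m_{2t} = e_1 + e_{t+1}`, `m_{2t+1} = e_1 + i e_{t+1}`
(indexed from 0, so `j : Fin (2δ-1)` corresponds to mask `m_{j+1}`). -/
def masks (d δ : ℕ) (j : Fin (2 * δ - 1)) : Fin d → ℂ := fun k =>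
  (if (k : ℕ) = 0 then 1 else 0) +
  (if (j : ℕ) % 2 = 1 ∧ (k : ℕ) = ((j : ℕ) + 1) / 2 then 1 else 0) +
  (if (j : ℕ) ≠ 0 ∧ (j : ℕ) % 2 = 0 ∧ (k : ℕ) = (j : ℕ) / 2 then Complex.I else 0)

/-- circular shift: `(S_ℓ x)_j = x_{j+ℓ}` -/
def shiftVec (d : ℕ) (ℓ : Fin d) (x : Fin d → ℂ) : Fin d → ℂ := fun j => x (j + ℓ)

open Finset

section CircDist

variable {d : ℕ}

theorem circDist_eq_min (a b : Fin d) : circDist a b = min (b - a).val (a - b).val := by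
  have := a.isLt; have := b.isLt
  unfold circDist
  rcases lt_trichotomy a b with h | rfl | h
  · rw [Fin.sub_val_of_le h.le, Fin.coe_sub_iff_lt.2 h]; have := Fin.lt_def.1 h; omega
  · rw [Fin.sub_val_of_le le_rfl]; simp
  · rw [Fin.coe_sub_iff_lt.2 h, Fin.sub_val_of_le h.le]; have := Fin.lt_def.1 h; omega

theorem circDist_eq (a b : Fin d) : circDist a b = min (b - a).val (d - (b - a).val) := by
  have := a.isLt; have := b.isLt
  unfold circDist
  rcases lt_trichotomy a b with h | rfl | h
  · rw [Fin.sub_val_of_le h.le]; have := Fin.lt_def.1 h; omega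
  · rw [Fin.sub_val_of_le le_rfl]; simp
  · rw [Fin.coe_sub_iff_lt.2 h]; have := Fin.lt_def.1 h; omega

theorem circDist_add_right (a b ℓ : Fin d) : circDist (a + ℓ) (b + ℓ) = circDist a b := by
  have : NeZero d := .of_pos a.pos
  rw [circDist_eq, circDist_eq, add_sub_add_right_eq_sub]

theorem card_filter_min_val_lt {δ : ℕ} (hd : 2 * δ - 1 ≤ d) :
    #{c : Fin d | min c.val (d - c.val) < δ} = 2 * δ - 1 := by
  have hval :
      #{c : Fin d | min c.val (d - c.val) < δ} = #{n ∈ range d | min n (d - n) < δ} := by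
    rw [← Nat.Iio_eq_range, ← Fin.map_valEmbedding_univ, Finset.filter_map, Finset.card_map]
    rfl
  have hrange : {n ∈ range d | min n (d - n) < δ} = range δ ∪ Ico (d - δ + 1) d := by
    ext n
    simp only [mem_filter, mem_range, mem_union, mem_Ico]
    omega
  have hdisj : Disjoint (range δ) (Ico (d - δ + 1) d) :=
    disjoint_left.2 fun n hn hn' => by simp only [mem_range, mem_Ico] at hn hn'; omega
  rw [hval, hrange, card_union_of_disjoint hdisj, card_range, Nat.card_Ico]
  omega

theorem card_circDist_lt {δ : ℕ} (hd : 2 * δ - 1 ≤ d) :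
    Fintype.card {p : Fin d × Fin d // circDist p.1 p.2 < δ} = d * (2 * δ - 1) := by
  have hrow (a : Fin d) : #{b | circDist a b < δ} = 2 * δ - 1 := by
    have : NeZero d := .of_pos a.pos
    rw [← card_filter_min_val_lt hd, card_filter, card_filter,
      ← Equiv.sum_comp (Equiv.addRight a)]
    simp only [Equiv.coe_addRight, circDist_eq, add_sub_cancel_right]
  rw [Fintype.card_subtype, card_filter, Fintype.sum_prod_type]
  simp only [← card_filter, hrow, sum_const, card_univ, Fintype.card_fin, smul_eq_mul]

end CircDist

namespace Matrix

theorem vecMulVec_star_mem_of_polarization {m : Type*} {M : Submodule ℂ (Matrix m m ℂ)}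
    {x y : m → ℂ} (hx : vecMulVec x (star x) ∈ M) (hy : vecMulVec y (star y) ∈ M)
    (hxy : vecMulVec (x + y) (star (x + y)) ∈ M)
    (hxIy : vecMulVec (x + Complex.I • y) (star (x + Complex.I • y)) ∈ M) :
    vecMulVec x (star y) ∈ M ∧ vecMulVec y (star x) ∈ M := by
  have hxy' : vecMulVec x (star y) = (2⁻¹ : ℂ) • vecMulVec (x + y) (star (x + y)) +
      (Complex.I / 2) • vecMulVec (x + Complex.I • y) (star (x + Complex.I • y)) -
      ((1 + Complex.I) / 2) • (vecMulVec x (star x) + vecMulVec y (star y)) := by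
    ext i j
    simp only [vecMulVec_apply, add_apply, sub_apply, smul_apply, Pi.add_apply, Pi.smul_apply,
      Pi.star_apply, star_add, star_smul, smul_eq_mul, Complex.star_def, Complex.conj_I]
    linear_combination (x i * starRingEnd ℂ (y j) - y i * starRingEnd ℂ (x j) +
      Complex.I * y i * starRingEnd ℂ (y j)) / 2 * Complex.I_sq
  have hyx' : vecMulVec y (star x) = (2⁻¹ : ℂ) • vecMulVec (x + y) (star (x + y)) -
      (Complex.I / 2) • vecMulVec (x + Complex.I • y) (star (x + Complex.I • y)) -
      ((1 - Complex.I) / 2) • (vecMulVec x (star x) + vecMulVec y (star y)) := by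
    ext i j
    simp only [vecMulVec_apply, add_apply, sub_apply, smul_apply, Pi.add_apply, Pi.smul_apply,
      Pi.star_apply, star_add, star_smul, smul_eq_mul, Complex.star_def, Complex.conj_I]
    linear_combination (y i * starRingEnd ℂ (x j) - x i * starRingEnd ℂ (y j) -
      Complex.I * y i * starRingEnd ℂ (y j)) / 2 * Complex.I_sq
  have hdiag := M.add_mem hx hy
  rw [hxy', hyx']
  exact ⟨M.sub_mem (M.add_mem (M.smul_mem _ hxy) (M.smul_mem _ hxIy)) (M.smul_mem _ hdiag),
    M.sub_mem (M.sub_mem (M.smul_mem _ hxy) (M.smul_mem _ hxIy)) (M.smul_mem _ hdiag)⟩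

variable {R m n : Type*} [Fintype m] [Fintype n] [DecidableEq m] [DecidableEq n]

theorem mem_span_single_one_iff [Semiring R] (S : Set (m × n)) (A : Matrix m n R) :
    A ∈ Submodule.span R (Set.range fun p : S => single p.1.1 p.1.2 (1 : R)) ↔
      ∀ i j, (i, j) ∉ S → A i j = 0 := by
  constructor
  · intro hA i j hij
    induction hA using Submodule.span_induction with
    | mem _ hx =>
      obtain ⟨p, rfl⟩ := hx
      simp only [single_apply, ite_eq_right_iff]
      rintro ⟨rfl, rfl⟩
      exact absurd p.2 hij
    | zero => rfl
    | add _ _ _ _ hx hy => simp [hx, hy]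
    | smul c _ _ hx => simp [hx]
  · intro hA
    rw [matrix_eq_sum_single A]
    refine Submodule.sum_mem _ fun i _ => Submodule.sum_mem _ fun j _ => ?_
    by_cases hij : (i, j) ∈ S
    · rw [← mul_one (A i j), ← smul_eq_mul, ← smul_single]
      exact Submodule.smul_mem _ _ (Submodule.subset_span ⟨⟨(i, j), hij⟩, rfl⟩)
    · simp [hA i j hij]

theorem finrank_span_single_one [Ring R] [StrongRankCondition R] [Nontrivial R]
    (S : Set (m × n)) [Fintype S] :
    Module.finrank R (Submodule.span R (Set.range fun p : S => single p.1.1 p.1.2 (1 : R))) =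
      Fintype.card S :=
  finrank_span_eq_card <| by
    convert (stdBasis R m n).linearIndependent.comp ((↑) : S → m × n) Subtype.val_injective
    exact (stdBasis_eq_single R _ _).symm

end Matrix

theorem bandSubmodule_eq_span_single (d δ : ℕ) :
    bandSubmodule d δ = Submodule.span ℂ
      (Set.range fun p : {p : Fin d × Fin d | circDist p.1 p.2 < δ} => single p.1.1 p.1.2 1) := by
  ext A
  rw [Matrix.mem_span_single_one_iff]
  simp only [Set.mem_ofPred_eq, not_lt]
  rfl

theorem finrank_bandSubmodule {d δ : ℕ} (hd : 2 * δ - 1 ≤ d) :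
    Module.finrank ℂ (bandSubmodule d δ) = d * (2 * δ - 1) := by
  rw [bandSubmodule_eq_span_single, Matrix.finrank_span_single_one, ← card_circDist_lt hd]
  rfl

section Masks

variable {d δ : ℕ}

theorem shiftVec_add (ℓ : Fin d) (x y : Fin d → ℂ) :
    shiftVec d ℓ (x + y) = shiftVec d ℓ x + shiftVec d ℓ y := rfl

theorem shiftVec_smul (ℓ : Fin d) (c : ℂ) (x : Fin d → ℂ) :
    shiftVec d ℓ (c • x) = c • shiftVec d ℓ x := rfl

theorem shiftVec_single [NeZero d] (ℓ k : Fin d) (c : ℂ) :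
    shiftVec d ℓ (Pi.single k c) = Pi.single (k - ℓ) c := by
  ext j
  simp only [shiftVec, Pi.single_apply, eq_sub_iff_add_eq]

theorem masks_zero [NeZero d] (h : 0 < 2 * δ - 1) : masks d δ ⟨0, h⟩ = Pi.single 0 1 := by
  ext k
  simp only [masks, Pi.single_apply, Fin.ext_iff, Fin.val_zero]
  split_ifs <;> simp_all

theorem masks_odd [NeZero d] (c : Fin d) (hc : c ≠ 0) (h : 2 * c.val - 1 < 2 * δ - 1) :
    masks d δ ⟨2 * c.val - 1, h⟩ = Pi.single 0 1 + Pi.single c 1 := by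
  have : c.val ≠ 0 := Fin.val_ne_zero_iff.2 hc
  ext k
  simp only [masks, Pi.add_apply, Pi.single_apply, Fin.ext_iff, Fin.val_zero]
  split_ifs <;> first | omega | simp

theorem masks_even [NeZero d] (c : Fin d) (hc : c ≠ 0) (h : 2 * c.val < 2 * δ - 1) :
    masks d δ ⟨2 * c.val, h⟩ = Pi.single 0 1 + Complex.I • Pi.single c 1 := by
  have : c.val ≠ 0 := Fin.val_ne_zero_iff.2 hc
  ext k
  simp only [masks, Pi.add_apply, Pi.smul_apply, Pi.single_apply, Fin.ext_iff, Fin.val_zero]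
  split_ifs <;> first | omega | simp

theorem masks_apply_ne_zero {j : Fin (2 * δ - 1)} {k : Fin d} (h : masks d δ j k ≠ 0) :
    k.val = 0 ∨ k.val = (j.val + 1) / 2 := by
  by_contra! hk
  have hodd : ¬(j.val % 2 = 1 ∧ k.val = (j.val + 1) / 2) := fun h' => hk.2 h'.2
  have heven : ¬(j.val ≠ 0 ∧ j.val % 2 = 0 ∧ k.val = j.val / 2) := by omega
  simp [masks, hk.1, hodd, heven] at h

end Masks

section MaskSpan

variable {d δ : ℕ}

noncomputable def maskSpan (d δ : ℕ) : Submodule ℂ (Matrix (Fin d) (Fin d) ℂ) :=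
  Submodule.span ℂ (Set.range fun p : Fin d × Fin (2 * δ - 1) =>
    vecMulVec (shiftVec d p.1 (masks d δ p.2)) (star (shiftVec d p.1 (masks d δ p.2))))

theorem vecMulVec_shiftVec_masks_mem_maskSpan (ℓ : Fin d) (j : Fin (2 * δ - 1)) :
    vecMulVec (shiftVec d ℓ (masks d δ j)) (star (shiftVec d ℓ (masks d δ j))) ∈
      maskSpan d δ :=
  Submodule.subset_span ⟨(ℓ, j), rfl⟩

theorem single_mem_maskSpan (a c : Fin d) (hc : c.val < δ) :
    single a (a + c) 1 ∈ maskSpan d δ ∧ single (a + c) a 1 ∈ maskSpan d δ := by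
  have : NeZero d := .of_pos a.pos
  have hdiag (b : Fin d) : vecMulVec (Pi.single b 1) (star (Pi.single b 1)) ∈ maskSpan d δ := by
    simpa [masks_zero (by omega : 0 < 2 * δ - 1), shiftVec_single] using
      vecMulVec_shiftVec_masks_mem_maskSpan (δ := δ) (-b) ⟨0, by omega⟩
  rcases eq_or_ne c 0 with rfl | hc0
  · simpa [single_eq_single_vecMulVec_single, Pi.star_single] using hdiag a
  have hsum := vecMulVec_shiftVec_masks_mem_maskSpan (δ := δ) (-a) ⟨2 * c.val - 1, by omega⟩
  have hsumI := vecMulVec_shiftVec_masks_mem_maskSpan (δ := δ) (-a) ⟨2 * c.val, by omega⟩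
  rw [masks_odd c hc0, shiftVec_add, shiftVec_single, shiftVec_single] at hsum
  rw [masks_even c hc0, shiftVec_add, shiftVec_smul, shiftVec_single, shiftVec_single] at hsumI
  simp only [sub_neg_eq_add, zero_add, add_comm c a] at hsum hsumI
  simpa [single_eq_single_vecMulVec_single, Pi.star_single] using
    vecMulVec_star_mem_of_polarization (hdiag a) (hdiag (a + c)) hsum hsumI

theorem single_mem_maskSpan_of_circDist_lt {a b : Fin d} (h : circDist a b < δ) :
    single a b 1 ∈ maskSpan d δ := by
  have : NeZero d := .of_pos a.pos
  rw [circDist_eq_min] at h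
  rcases min_lt_iff.1 h with h | h
  · simpa using (single_mem_maskSpan a (b - a) h).1
  · simpa using (single_mem_maskSpan b (a - b) h).2

theorem bandSubmodule_le_maskSpan : bandSubmodule d δ ≤ maskSpan d δ := by
  rw [bandSubmodule_eq_span_single, Submodule.span_le]
  rintro _ ⟨p, rfl⟩
  exact single_mem_maskSpan_of_circDist_lt p.2

theorem maskSpan_le_bandSubmodule : maskSpan d δ ≤ bandSubmodule d δ := by
  rw [maskSpan, Submodule.span_le]
  rintro _ ⟨⟨ℓ, j⟩, rfl⟩ u v huv
  by_contra hne
  have hne' : masks d δ j (u + ℓ) * star (masks d δ j (v + ℓ)) ≠ 0 := hne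
  have hu := masks_apply_ne_zero (left_ne_zero_of_mul hne')
  have hv := masks_apply_ne_zero (k := v + ℓ) (by simpa using right_ne_zero_of_mul hne')
  have := j.isLt
  rw [← circDist_add_right u v ℓ] at huv
  unfold circDist at huv
  omega

end MaskSpan

theorem stmt_13_general (d δ : ℕ) (hd : 2 * δ - 1 ≤ d) :
    Submodule.span ℂ
        (Set.range fun p : Fin d × Fin (2 * δ - 1) =>
          Matrix.vecMulVec (shiftVec d p.1 (masks d δ p.2))
            (star (shiftVec d p.1 (masks d δ p.2)))) =
      bandSubmodule d δ ∧
    Module.finrank ℂ (bandSubmodule d δ) = d * (2 * δ - 1) :=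
  ⟨le_antisymm maskSpan_le_bandSubmodule bandSubmodule_le_maskSpan, finrank_bandSubmodule hd⟩

theorem stmt_13 (d δ : ℕ) (hδ : 1 ≤ δ) (hd : 2 * δ - 1 ≤ d) :
    Submodule.span ℂ
        (Set.range fun p : Fin d × Fin (2 * δ - 1) =>
          Matrix.vecMulVec (shiftVec d p.1 (masks d δ p.2))
            (star (shiftVec d p.1 (masks d δ p.2)))) =
      bandSubmodule d δ ∧
    Module.finrank ℂ (bandSubmodule d δ) = d * (2 * δ - 1) :=
  stmt_13_general d δ hd
end

section
/- Let S ∈ ℝ^{d×d} be the cyclic shift permutation matrix, let D ∈ ℝ^{d(δ-1)×d} be the block column matrix with blocks I + S, I + S^2, ..., I + S^{δ-1}, and let C be the block matrix [[I_d, 0, 0], [D, 2I_{d(δ-1)}, 0], [D, 0, 2I_{d(δ-1)}]]. Then σ_max(C) ≤ 2 + 2√(2δ) and σ_max(C^{-1}) ≤ 1/2 + √(2δ), so the condition number of C satisfies κ(C) ≤ cδ for an absolute constant c. -/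
open Matrix Real

/-- the cyclic shift permutation matrix `S` on `ℝ^d` -/
def cycShift (d : ℕ) : Matrix (Fin d) (Fin d) ℝ :=
  Matrix.of fun i j => if (j : ℕ) = ((i : ℕ) + 1) % d then 1 else 0

/-- the block column matrix `D` with blocks `I + S, I + S^2, ..., I + S^{δ-1}` -/
def blockD (d δ : ℕ) : Matrix (Fin (δ - 1) × Fin d) (Fin d) ℝ :=
  Matrix.of fun p j => (1 + (cycShift d) ^ ((p.1 : ℕ) + 1)) p.2 j

/-- `C = [[I, 0, 0], [D, 2I, 0], [D, 0, 2I]]` -/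
def matC (d δ : ℕ) :
    Matrix (Fin d ⊕ ((Fin (δ - 1) × Fin d) ⊕ (Fin (δ - 1) × Fin d)))
      (Fin d ⊕ ((Fin (δ - 1) × Fin d) ⊕ (Fin (δ - 1) × Fin d))) ℝ :=
  Matrix.fromBlocks 1 0
    (Matrix.of fun b a => Sum.elim (fun p => blockD d δ p a) (fun p => blockD d δ p a) b)
    ((2 : ℝ) • 1)

/-- the explicit inverse `C⁻¹ = [[I, 0, 0], [-D/2, I/2, 0], [-D/2, 0, I/2]]` -/
noncomputable def matCinv (d δ : ℕ) :
    Matrix (Fin d ⊕ ((Fin (δ - 1) × Fin d) ⊕ (Fin (δ - 1) × Fin d)))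
      (Fin d ⊕ ((Fin (δ - 1) × Fin d) ⊕ (Fin (δ - 1) × Fin d))) ℝ :=
  Matrix.fromBlocks 1 0
    ((-(1/2) : ℝ) • Matrix.of fun b a =>
      Sum.elim (fun p => blockD d δ p a) (fun p => blockD d δ p a) b)
    (((1:ℝ)/2) • 1)

/-
`C` is block lower triangular, `[[I, 0], [E, 2I]]` with `E = [D; D]`, so its inverse
`[[I, 0], [-E/2, I/2]]` is read off directly, and for `x = (a, b)` the triangle inequality gives
`‖C x‖ ≤ ‖(a, E a)‖ + 2‖b‖` (similarly for `C⁻¹`). Every block `I + S^k` of `D` is the sum of two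
permutation matrices, hence has norm at most `2`, so `‖E a‖² = 2‖D a‖² ≤ 8(δ - 1)‖a‖²` and
`‖(a, E a)‖ ≤ √(8δ) ‖a‖`.
-/

theorem sqrt_sum_sq_eq_norm {ι : Type*} [Fintype ι] (x : ι → ℝ) :
    √(∑ i, x i ^ 2) = ‖(WithLp.toLp 2 x : EuclideanSpace ℝ ι)‖ := by
  simp [EuclideanSpace.norm_eq]

theorem permMatrix_pow {n R : Type*} [Fintype n] [DecidableEq n] [Semiring R]
    (σ : Equiv.Perm n) (k : ℕ) : (σ ^ k).permMatrix R = σ.permMatrix R ^ k := by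
  induction k with
  | zero => simp
  | succ k ih => rw [pow_succ, permMatrix_mul, ih, pow_succ']

theorem sum_sq_one_add_permMatrix_mulVec_le {n : Type*} [Fintype n] [DecidableEq n]
    (σ : Equiv.Perm n) (v : n → ℝ) :
    ∑ i, ((1 + σ.permMatrix ℝ) *ᵥ v) i ^ 2 ≤ 4 * ∑ i, v i ^ 2 := by
  have hperm : ∑ i, v (σ i) ^ 2 = ∑ i, v i ^ 2 := Equiv.sum_comp σ (fun i => v i ^ 2)
  calc ∑ i, ((1 + σ.permMatrix ℝ) *ᵥ v) i ^ 2 = ∑ i, (v i + v (σ i)) ^ 2 := by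
        simp [add_mulVec, permMatrix_mulVec]
    _ ≤ ∑ i, (2 * v i ^ 2 + 2 * v (σ i) ^ 2) :=
        Finset.sum_le_sum fun i _ => by nlinarith [sq_nonneg (v i - v (σ i))]
    _ = 4 * ∑ i, v i ^ 2 := by
        rw [Finset.sum_add_distrib, ← Finset.mul_sum, ← Finset.mul_sum, hperm]; ring

section LowerBlockTriangular

variable {m n : Type*} [Fintype m] [Fintype n] [DecidableEq m] [DecidableEq n]

theorem fromBlocks_mul_fromBlocks_inv {𝕜 : Type*} [Field 𝕜] (B : Matrix n m 𝕜) {t : 𝕜}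
    (ht : t ≠ 0) :
    fromBlocks (1 : Matrix m m 𝕜) 0 B (t • 1) *
      fromBlocks 1 0 (-t⁻¹ • B) (t⁻¹ • (1 : Matrix n n 𝕜)) = 1 := by
  simp [fromBlocks_multiply, ← fromBlocks_one, smul_smul, ht]

theorem fromBlocks_inv_mul_fromBlocks {𝕜 : Type*} [Field 𝕜] (B : Matrix n m 𝕜) {t : 𝕜}
    (ht : t ≠ 0) :
    fromBlocks (1 : Matrix m m 𝕜) 0 (-t⁻¹ • B) (t⁻¹ • (1 : Matrix n n 𝕜)) *
      fromBlocks 1 0 B (t • 1) = 1 := by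
  simp [fromBlocks_multiply, ← fromBlocks_one, smul_smul, ht]

theorem sqrt_sum_sq_fromBlocks_mulVec_le (B : Matrix n m ℝ) (t β : ℝ)
    (hB : ∀ v, ∑ i, (B *ᵥ v) i ^ 2 ≤ β * ∑ j, v j ^ 2) (x : m ⊕ n → ℝ) :
    √(∑ i, (fromBlocks (1 : Matrix m m ℝ) 0 B (t • 1) *ᵥ x) i ^ 2) ≤
      (√(1 + β) + |t|) * √(∑ i, x i ^ 2) := by
  obtain ⟨a, b, rfl⟩ : ∃ a b, x = Sum.elim a b := ⟨_, _, (Sum.elim_comp_inl_inr x).symm⟩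
  have hsplit : fromBlocks (1 : Matrix m m ℝ) 0 B (t • 1) *ᵥ Sum.elim a b =
      Sum.elim a (B *ᵥ a) + t • Sum.elim (0 : m → ℝ) b := by
    rw [fromBlocks_mulVec]
    ext (i | i) <;> simp [smul_mulVec, one_mulVec]
  have hsum (u : m → ℝ) (w : n → ℝ) : ∑ i, Sum.elim u w i ^ 2 = ∑ i, u i ^ 2 + ∑ i, w i ^ 2 :=
    Fintype.sum_sum_type _
  have ha0 : 0 ≤ ∑ i, a i ^ 2 := Finset.sum_nonneg fun i _ => sq_nonneg (a i)
  have hb0 : 0 ≤ ∑ i, b i ^ 2 := Finset.sum_nonneg fun i _ => sq_nonneg (b i)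
  calc √(∑ i, (fromBlocks (1 : Matrix m m ℝ) 0 B (t • 1) *ᵥ Sum.elim a b) i ^ 2)
      ≤ √(∑ i, Sum.elim a (B *ᵥ a) i ^ 2) + |t| * √(∑ i, Sum.elim (0 : m → ℝ) b i ^ 2) := by
        simp only [hsplit, sqrt_sum_sq_eq_norm, WithLp.toLp_add, WithLp.toLp_smul]
        exact (norm_add_le _ _).trans_eq (by rw [norm_smul, Real.norm_eq_abs])
    _ ≤ √(1 + β) * √(∑ i, a i ^ 2) + |t| * √(∑ i, b i ^ 2) := by
        rw [hsum, hsum, ← sqrt_mul' _ ha0]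
        gcongr
        · linarith [hB a]
        · simp
    _ ≤ (√(1 + β) + |t|) * √(∑ i, Sum.elim a b i ^ 2) := by
        rw [add_mul, hsum]
        gcongr <;> linarith

end LowerBlockTriangular

theorem cycShift_eq_permMatrix (d : ℕ) : cycShift d = (finRotate d).permMatrix ℝ := by
  ext i j
  have : NeZero d := i.neZero
  simp [cycShift, PEquiv.toMatrix_apply, Equiv.toPEquiv_apply, Fin.ext_iff, Fin.val_add, eq_comm]

theorem sum_sq_blockD_mulVec_le (d δ : ℕ) (v : Fin d → ℝ) :
    ∑ p, (blockD d δ *ᵥ v) p ^ 2 ≤ 4 * (δ - 1 : ℕ) * ∑ i, v i ^ 2 := by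
  have hblock (k : Fin (δ - 1)) (i : Fin d) : (blockD d δ *ᵥ v) (k, i) =
      ((1 + (finRotate d ^ ((k : ℕ) + 1)).permMatrix ℝ) *ᵥ v) i := by
    rw [permMatrix_pow, ← cycShift_eq_permMatrix]; rfl
  calc ∑ p, (blockD d δ *ᵥ v) p ^ 2
      = ∑ k : Fin (δ - 1), ∑ i, ((1 + (finRotate d ^ ((k : ℕ) + 1)).permMatrix ℝ) *ᵥ v) i ^ 2 := by
        simp only [Fintype.sum_prod_type, hblock]
    _ ≤ ∑ _k : Fin (δ - 1), 4 * ∑ i, v i ^ 2 :=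
        Finset.sum_le_sum fun k _ => sum_sq_one_add_permMatrix_mulVec_le _ v
    _ = 4 * (δ - 1 : ℕ) * ∑ i, v i ^ 2 := by
        rw [Finset.sum_const, Finset.card_univ, Fintype.card_fin, nsmul_eq_mul]; ring

theorem matC_eq_fromBlocks (d δ : ℕ) :
    matC d δ = fromBlocks 1 0 (fromRows (blockD d δ) (blockD d δ)) ((2 : ℝ) • 1) := by
  rw [matC]
  congr
  ext (p | p) a <;> rfl

theorem matCinv_eq_fromBlocks (d δ : ℕ) :
    matCinv d δ =
      fromBlocks 1 0 (-(2 : ℝ)⁻¹ • fromRows (blockD d δ) (blockD d δ)) ((2 : ℝ)⁻¹ • 1) := by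
  rw [matCinv]
  congr 1
  · ext (p | p) a <;> simp
  · norm_num

theorem sum_sq_fromRows_blockD_mulVec_le (d δ : ℕ) (v : Fin d → ℝ) :
    ∑ p, (fromRows (blockD d δ) (blockD d δ) *ᵥ v) p ^ 2 ≤ 8 * (δ - 1 : ℕ) * ∑ i, v i ^ 2 := by
  rw [fromRows_mulVec, Fintype.sum_sum_type]
  simp only [Sum.elim_inl, Sum.elim_inr]
  linarith [sum_sq_blockD_mulVec_le d δ v]

theorem sqrt_sum_sq_matC_mulVec_le (d δ : ℕ) (hδ : 1 ≤ δ)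
    (x : Fin d ⊕ ((Fin (δ - 1) × Fin d) ⊕ (Fin (δ - 1) × Fin d)) → ℝ) :
    √(∑ i, (matC d δ *ᵥ x) i ^ 2) ≤ (2 + 2 * √(2 * δ)) * √(∑ i, x i ^ 2) := by
  rw [matC_eq_fromBlocks]
  refine (sqrt_sum_sq_fromBlocks_mulVec_le _ 2 _ (sum_sq_fromRows_blockD_mulVec_le d δ) x).trans ?_
  have hβ : √(1 + 8 * ((δ - 1 : ℕ) : ℝ)) ≤ 2 * √(2 * δ) := by
    rw [Real.sqrt_le_iff, mul_pow, sq_sqrt (by positivity), Nat.cast_sub hδ]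
    refine ⟨by positivity, ?_⟩
    push_cast
    linarith
  rw [abs_two]
  exact mul_le_mul_of_nonneg_right (by linarith) (sqrt_nonneg _)

theorem sqrt_sum_sq_matCinv_mulVec_le (d δ : ℕ) (hδ : 1 ≤ δ)
    (x : Fin d ⊕ ((Fin (δ - 1) × Fin d) ⊕ (Fin (δ - 1) × Fin d)) → ℝ) :
    √(∑ i, (matCinv d δ *ᵥ x) i ^ 2) ≤ (1 / 2 + √(2 * δ)) * √(∑ i, x i ^ 2) := by
  have hB (v : Fin d → ℝ) : ∑ p, ((-(2 : ℝ)⁻¹ • fromRows (blockD d δ) (blockD d δ)) *ᵥ v) p ^ 2 ≤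
      2 * (δ - 1 : ℕ) * ∑ i, v i ^ 2 := by
    simp only [smul_mulVec, Pi.smul_apply, smul_eq_mul, mul_pow]
    rw [← Finset.mul_sum]
    linarith [sum_sq_fromRows_blockD_mulVec_le d δ v]
  rw [matCinv_eq_fromBlocks]
  refine (sqrt_sum_sq_fromBlocks_mulVec_le _ _ _ hB x).trans ?_
  have hβ : √(1 + 2 * ((δ - 1 : ℕ) : ℝ)) ≤ √(2 * δ) := by
    gcongr
    rw [Nat.cast_sub hδ]
    push_cast
    linarith
  rw [abs_of_pos (by norm_num : (0 : ℝ) < 2⁻¹)]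
  exact mul_le_mul_of_nonneg_right (by linarith) (sqrt_nonneg _)

theorem two_add_two_mul_sqrt_mul_half_add_sqrt_le (δ : ℕ) (hδ : 1 ≤ δ) :
    (2 + 2 * √(2 * δ)) * (1 / 2 + √(2 * δ)) ≤ 11 * δ := by
  have hδ' : (1 : ℝ) ≤ δ := by exact_mod_cast hδ
  have hs2 : √(2 * δ) ^ 2 = 2 * δ := sq_sqrt (by positivity)
  have hs1 : 1 ≤ √(2 * δ) := Real.one_le_sqrt.mpr (by linarith)
  nlinarith

theorem stmt_14 :
    ∃ c : ℝ, 0 < c ∧ ∀ d δ : ℕ, 1 ≤ δ →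
      (matC d δ) * (matCinv d δ) = 1 ∧ (matCinv d δ) * (matC d δ) = 1 ∧
      (∀ x, Real.sqrt (∑ i, ((matC d δ).mulVec x i)^2) ≤
        (2 + 2 * Real.sqrt (2 * δ)) * Real.sqrt (∑ i, (x i)^2)) ∧
      (∀ x, Real.sqrt (∑ i, ((matCinv d δ).mulVec x i)^2) ≤
        (1/2 + Real.sqrt (2 * δ)) * Real.sqrt (∑ i, (x i)^2)) ∧
      (2 + 2 * Real.sqrt (2 * δ)) * (1/2 + Real.sqrt (2 * δ)) ≤ c * δ := by
  refine ⟨11, by norm_num, fun d δ hδ => ⟨?_, ?_, sqrt_sum_sq_matC_mulVec_le d δ hδ,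
    sqrt_sum_sq_matCinv_mulVec_le d δ hδ, two_add_two_mul_sqrt_mul_half_add_sqrt_le δ hδ⟩⟩
  · rw [matC_eq_fromBlocks, matCinv_eq_fromBlocks]
    exact fromBlocks_mul_fromBlocks_inv _ two_ne_zero
  · rw [matC_eq_fromBlocks, matCinv_eq_fromBlocks]
    exact fromBlocks_inv_mul_fromBlocks _ two_ne_zero
end

section
/- Let X_0 = ∑_j ν_j x_j x_j^* be Hermitian with eigenvalues ν_1 > ν_2 ≥ ... ≥ ν_d and orthonormal eigenvectors x_j, and let X = ∑_j λ_j v_j v_j^* be Hermitian with ||X - X_0||_F ≤ η ||X_0||_F. Then 1 - |⟨x_1, v_1⟩|^2 ≤ 4η^2 ||X_0||_F^2 / (ν_1 - ν_2)^2. -/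
/-!
Put `c = ⟪x, v⟫` and `w = v - c • x`, so that `w ⊥ x` and `‖w‖² = 1 - ‖c‖²`. Since `T₀` is
symmetric and `x` is an eigenvector, `T₀` maps `x^⊥` to itself, and there its eigenvalues are at
most `ν₂`; hence `re ⟪T₀ w, w⟫ ≤ ν₂ ‖w‖²`. On the other hand `T v = λ v` gives
`re ⟪T₀ w, w⟫ = λ ‖w‖² - re ⟪(T - T₀) v, w⟫ ≥ λ ‖w‖² - ε ‖w‖`, and testing the top eigenvalue `λ`
of `T` against `x` gives `λ ≥ ν₁ - ε`. So `(ν₁ - ν₂ - ε) ‖w‖² ≤ ε ‖w‖`, which forces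
`‖w‖ ≤ 2ε / (ν₁ - ν₂)` unless `ν₁ - ν₂ ≤ 2ε`, where the bound is trivial. For matrices one takes
`ε = η ‖X₀‖_F`, which bounds the Frobenius norm, hence the operator norm, of `X - X₀`.
-/

open scoped InnerProductSpace

section SymmetricOperator

variable {𝕜 E : Type*} [RCLike 𝕜] [NormedAddCommGroup E] [InnerProductSpace 𝕜 E]
  [FiniteDimensional 𝕜 E] {T : E →ₗ[𝕜] E}

open RCLike

theorem LinearMap.IsSymmetric.re_inner_apply_self_le (hT : T.IsSymmetric) {t : ℝ}
    (h : ∀ (μ : ℝ) (u : E), u ≠ 0 → T u = (μ : 𝕜) • u → μ ≤ t) (x : E) :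
    re ⟪T x, x⟫_𝕜 ≤ t * ‖x‖ ^ 2 := by
  set b := hT.eigenvectorBasis rfl
  set μ := hT.eigenvalues rfl
  have hexp : ⟪T x, x⟫_𝕜 = ∑ i, ((μ i * ‖⟪b i, x⟫_𝕜‖ ^ 2 : ℝ) : 𝕜) := by
    rw [← b.sum_inner_mul_inner]
    refine Finset.sum_congr rfl fun i _ => ?_
    rw [hT, hT.apply_eigenvectorBasis, inner_smul_right, ← inner_conj_symm x, mul_assoc,
      RCLike.conj_mul]
    push_cast
    rfl
  calc re ⟪T x, x⟫_𝕜 = ∑ i, μ i * ‖⟪b i, x⟫_𝕜‖ ^ 2 := by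
        simp only [hexp, map_sum, ofReal_re]
    _ ≤ ∑ i, t * ‖⟪b i, x⟫_𝕜‖ ^ 2 := by
        gcongr with i
        exact h _ _ (b.orthonormal.ne_zero i) (hT.apply_eigenvectorBasis rfl i)
    _ = t * ‖x‖ ^ 2 := by rw [← Finset.mul_sum, b.sum_sq_norm_inner_right]

theorem LinearMap.IsSymmetric.re_inner_apply_self_le_of_inner_eq_zero (hT : T.IsSymmetric)
    {x : E} {ν : 𝕜} (hx : T x = ν • x) {t : ℝ}
    (h : ∀ (μ : ℝ) (u : E), u ≠ 0 → T u = (μ : 𝕜) • u → ⟪x, u⟫_𝕜 = 0 → μ ≤ t)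
    {w : E} (hw : ⟪x, w⟫_𝕜 = 0) :
    re ⟪T w, w⟫_𝕜 ≤ t * ‖w‖ ^ 2 := by
  have hK : ∀ u ∈ (𝕜 ∙ x)ᗮ, T u ∈ (𝕜 ∙ x)ᗮ := by
    simp only [Submodule.mem_orthogonal_singleton_iff_inner_right]
    intro u hu
    rw [← hT, hx, inner_smul_left, hu, mul_zero]
  have := (hT.restrict_invariant hK).re_inner_apply_self_le (t := t) ?_
    ⟨w, Submodule.mem_orthogonal_singleton_iff_inner_right.mpr hw⟩
  · simpa using this
  rintro μ ⟨u, hu⟩ hu0 hTu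
  exact h μ u (by simpa using hu0) (congrArg Subtype.val hTu)
    (Submodule.mem_orthogonal_singleton_iff_inner_right.mp hu)

theorem sq_le_four_mul_sq_div_sq_of_mul_sq_le {s ε g : ℝ} (hs : 0 ≤ s) (hs₁ : s ^ 2 ≤ 1)
    (hg : 0 < g) (h : (g - ε) * s ^ 2 ≤ ε * s) : s ^ 2 ≤ 4 * ε ^ 2 / g ^ 2 := by
  rw [le_div_iff₀ (by positivity)]
  rcases le_or_gt g (2 * ε) with hε | hε
  · nlinarith
  · rcases hs.eq_or_lt with rfl | hs
    · nlinarith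
    · have hgs : g * s ≤ 2 * ε := by nlinarith
      nlinarith [pow_le_pow_left₀ (by positivity) hgs 2]

theorem one_sub_norm_inner_sq_le_of_perturbation {T₀ T : E →ₗ[𝕜] E}
    (hT₀ : T₀.IsSymmetric) (hT : T.IsSymmetric) {ν₁ ν₂ lam ε : ℝ} (hgap : ν₂ < ν₁)
    {x v : E} (hx : ‖x‖ = 1) (hx₁ : T₀ x = (ν₁ : 𝕜) • x)
    (hsecond : ∀ (μ : ℝ) (u : E), u ≠ 0 → T₀ u = (μ : 𝕜) • u → ⟪x, u⟫_𝕜 = 0 → μ ≤ ν₂)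
    (hv : ‖v‖ = 1) (hv₁ : T v = (lam : 𝕜) • v)
    (htop : ∀ (μ : ℝ) (u : E), u ≠ 0 → T u = (μ : 𝕜) • u → μ ≤ lam)
    (hE : ∀ u, ‖(T - T₀) u‖ ≤ ε * ‖u‖) :
    1 - ‖⟪x, v⟫_𝕜‖ ^ 2 ≤ 4 * ε ^ 2 / (ν₁ - ν₂) ^ 2 := by
  set c := ⟪x, v⟫_𝕜
  set w := v - c • x
  have hxw : ⟪x, w⟫_𝕜 = 0 := by
    rw [inner_sub_right, inner_smul_right, inner_self_eq_norm_sq_to_K, hx]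
    simp [c]
  have hvw : ⟪v, w⟫_𝕜 = ((‖w‖ ^ 2 : ℝ) : 𝕜) := by
    rw [show v = w + c • x by simp [w], inner_add_left, inner_smul_left, hxw]
    simp [inner_self_eq_norm_sq_to_K]
  have hw : ‖w‖ ^ 2 = 1 - ‖c‖ ^ 2 := by
    have := norm_add_sq_eq_norm_sq_add_norm_sq_of_inner_eq_zero (c • x) w
      (by rw [inner_smul_left, hxw, mul_zero])
    rw [show c • x + w = v by simp [w], hv, norm_smul, hx] at this
    linarith
  have hlam : ν₁ - ε ≤ lam := by
    have hTx : re ⟪T x, x⟫_𝕜 = ν₁ + re ⟪(T - T₀) x, x⟫_𝕜 := by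
      rw [show T x = T₀ x + (T - T₀) x by simp, inner_add_left, hx₁, inner_smul_left,
        inner_self_eq_norm_sq_to_K, hx]
      simp
    have hpert : |re ⟪(T - T₀) x, x⟫_𝕜| ≤ ε :=
      (abs_re_le_norm _).trans <| (norm_inner_le_norm (𝕜 := 𝕜) ((T - T₀) x) x).trans <| by
        simpa [hx] using hE x
    have hR := hT.re_inner_apply_self_le htop x
    rw [hTx, hx] at hR
    linarith [neg_abs_le (re ⟪(T - T₀) x, x⟫_𝕜)]
  have hupper : re ⟪T₀ w, w⟫_𝕜 ≤ ν₂ * ‖w‖ ^ 2 :=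
    hT₀.re_inner_apply_self_le_of_inner_eq_zero hx₁ hsecond hxw
  have hlower : lam * ‖w‖ ^ 2 - ε * ‖w‖ ≤ re ⟪T₀ w, w⟫_𝕜 := by
    have hT₀w : ⟪T₀ w, w⟫_𝕜 = (lam : 𝕜) * ⟪v, w⟫_𝕜 - ⟪(T - T₀) v, w⟫_𝕜 := by
      rw [map_sub, map_smul, hx₁, inner_sub_left, inner_smul_left, inner_smul_left, hxw,
        LinearMap.sub_apply, inner_sub_left, hv₁, inner_smul_left]
      simp
    have hpert : re ⟪(T - T₀) v, w⟫_𝕜 ≤ ε * ‖w‖ :=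
      (re_inner_le_norm _ _).trans <| by
        simpa [hv] using mul_le_mul_of_nonneg_right (hE v) (norm_nonneg w)
    rw [hT₀w, hvw, map_sub, ← ofReal_mul, ofReal_re]
    linarith
  rw [← hw]
  refine sq_le_four_mul_sq_div_sq_of_mul_sq_le (norm_nonneg w)
    (hw ▸ sub_le_self _ (sq_nonneg _)) (sub_pos.mpr hgap) ?_
  calc (ν₁ - ν₂ - ε) * ‖w‖ ^ 2 ≤ (lam - ν₂) * ‖w‖ ^ 2 := by
        gcongr ?_ * _
        linarith
    _ ≤ ε * ‖w‖ := by linarith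

end SymmetricOperator

section Frobenius

attribute [local instance] Matrix.frobeniusNormedAddCommGroup

variable {𝕜 m n : Type*} [RCLike 𝕜] [Fintype m] [Fintype n]

theorem Matrix.frobenius_norm_eq_sqrt (A : Matrix m n 𝕜) : ‖A‖ = √(∑ i, ∑ j, ‖A i j‖ ^ 2) := by
  simp only [frobenius_norm_def, Real.sqrt_eq_rpow, Real.rpow_two]

theorem Matrix.norm_toEuclideanLin_apply_le [DecidableEq n] (A : Matrix m n 𝕜)
    (u : EuclideanSpace 𝕜 n) : ‖toEuclideanLin A u‖ ≤ √(∑ i, ∑ j, ‖A i j‖ ^ 2) * ‖u‖ := by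
  rw [toLpLin_apply, ← frobenius_norm_eq_sqrt, ← frobenius_norm_replicateCol (ι := Unit),
    ← frobenius_norm_replicateCol (ι := Unit), replicateCol_mulVec]
  exact frobenius_norm_mul _ _

end Frobenius

theorem EuclideanSpace.inner_toLp_toLp_eq_sum {𝕜 n : Type*} [RCLike 𝕜] [Fintype n] (u v : n → 𝕜) :
    ⟪WithLp.toLp 2 u, WithLp.toLp 2 v⟫_𝕜 = ∑ i, starRingEnd 𝕜 (u i) * v i := by
  simp [PiLp.inner_apply, mul_comm]

open Real Complex Matrix

theorem stmt_16_general (d : ℕ) (X0 X : Matrix (Fin d) (Fin d) ℂ)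
    (hX0 : X0.IsHermitian) (hX : X.IsHermitian)
    (ν1 ν2 : ℝ) (hgap : ν2 < ν1)
    (x1 : Fin d → ℂ) (hx1 : X0.mulVec x1 = (ν1 : ℂ) • x1) (hx1n : ∑ i, ‖x1 i‖^2 = 1)
    (hsecond : ∀ (μ : ℝ) (v : Fin d → ℂ), v ≠ 0 → X0.mulVec v = (μ : ℂ) • v →
      (∑ i, (starRingEnd ℂ) (x1 i) * v i) = 0 → μ ≤ ν2)
    (lam : ℝ) (v1 : Fin d → ℂ)
    (hv1 : X.mulVec v1 = (lam : ℂ) • v1) (hv1n : ∑ i, ‖v1 i‖^2 = 1)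
    (htop : ∀ (μ : ℝ) (v : Fin d → ℂ), v ≠ 0 → X.mulVec v = (μ : ℂ) • v → μ ≤ lam)
    (η : ℝ)
    (hF : Real.sqrt (∑ i, ∑ j, ‖(X - X0) i j‖^2) ≤
      η * Real.sqrt (∑ i, ∑ j, ‖X0 i j‖^2)) :
    1 - ‖∑ i, (starRingEnd ℂ) (x1 i) * v1 i‖^2 ≤
      4 * η^2 * (∑ i, ∑ j, ‖X0 i j‖^2) / (ν1 - ν2)^2 := by
  set F := ∑ i, ∑ j, ‖X0 i j‖ ^ 2
  have hunit : ∀ u : Fin d → ℂ, ∑ i, ‖u i‖ ^ 2 = 1 → ‖WithLp.toLp 2 u‖ = 1 := fun u hu => by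
    simp [EuclideanSpace.norm_eq, hu]
  have heigen : ∀ (A : Matrix (Fin d) (Fin d) ℂ) (μ : ℝ) (u : EuclideanSpace ℂ (Fin d)),
      toEuclideanLin A u = (μ : ℂ) • u → A *ᵥ WithLp.ofLp u = (μ : ℂ) • WithLp.ofLp u :=
    fun A μ u h => congrArg WithLp.ofLp h
  have key := one_sub_norm_inner_sq_le_of_perturbation (ε := η * √F)
    (isSymmetric_toEuclideanLin_iff.mpr hX0) (isSymmetric_toEuclideanLin_iff.mpr hX) hgap
    (hunit x1 hx1n) (congrArg (WithLp.toLp 2) hx1)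
    (fun μ u hu h hxu => hsecond μ _ (by simpa using hu) (heigen X0 μ u h)
      ((EuclideanSpace.inner_toLp_toLp_eq_sum x1 u.ofLp).symm.trans hxu))
    (hunit v1 hv1n) (congrArg (WithLp.toLp 2) hv1)
    (fun μ u hu h => htop μ _ (by simpa using hu) (heigen X μ u h))
    (fun u => by
      rw [← map_sub]
      exact (norm_toEuclideanLin_apply_le _ _).trans (by gcongr))
  rwa [mul_pow, Real.sq_sqrt (by positivity), ← mul_assoc,
    EuclideanSpace.inner_toLp_toLp_eq_sum] at key

theorem stmt_16 (d : ℕ) (X0 X : Matrix (Fin d) (Fin d) ℂ)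
    (hX0 : X0.IsHermitian) (hX : X.IsHermitian)
    (ν1 ν2 : ℝ) (hgap : ν2 < ν1)
    (x1 : Fin d → ℂ) (hx1 : X0.mulVec x1 = (ν1 : ℂ) • x1) (hx1n : ∑ i, ‖x1 i‖^2 = 1)
    (hsecond : ∀ (μ : ℝ) (v : Fin d → ℂ), v ≠ 0 → X0.mulVec v = (μ : ℂ) • v →
      (∑ i, (starRingEnd ℂ) (x1 i) * v i) = 0 → μ ≤ ν2)
    (lam : ℝ) (v1 : Fin d → ℂ)
    (hv1 : X.mulVec v1 = (lam : ℂ) • v1) (hv1n : ∑ i, ‖v1 i‖^2 = 1)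
    (htop : ∀ (μ : ℝ) (v : Fin d → ℂ), v ≠ 0 → X.mulVec v = (μ : ℂ) • v → μ ≤ lam)
    (η : ℝ) (hη : 0 ≤ η)
    (hF : Real.sqrt (∑ i, ∑ j, ‖(X - X0) i j‖^2) ≤
      η * Real.sqrt (∑ i, ∑ j, ‖X0 i j‖^2)) :
    1 - ‖∑ i, (starRingEnd ℂ) (x1 i) * v1 i‖^2 ≤
      4 * η^2 * (∑ i, ∑ j, ‖X0 i j‖^2) / (ν1 - ν2)^2 :=
  stmt_16_general d X0 X hX0 hX ν1 ν2 hgap x1 hx1 hx1n hsecond lam v1 hv1 hv1n htop η hF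
end
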